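/- arXiv:1312.3734 — 4 statements merged into one kernel-verified Lean document; each statement's English description precedes it below -/
import Mathlib

section
/- Let H be a real Hilbert space and let f, g : H → ℝ ∪ {+∞} be proper lower semicontinuous convex functions (f, g ∈ Γ₀(H)). Assume either that g is supercoercive, or that f is bounded from below and g is coercive. Then the biconjugate identity (f* + g*)* = f □ g holds: for every x ∈ H, sup_{φ∈H} ( ⟨φ,x⟩ − f*(φ) − g*(φ) ) = inf_{y∈H} ( f(y) + g(x−y) ). -/
/-!
Since `(f □ g)* = f* + g*` for proper `f` and `g`, the left-hand side is the biconjugate of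
`f □ g`, so by Fenchel–Moreau (separate a point below the graph from the closed convex epigraph
in `H × ℝ`) it suffices that `f □ g` is proper, convex and lower semicontinuous. Convexity passes
from the epigraphs of `f` and `g` to that of `f □ g`. The coercivity hypothesis keeps the
near-minimizers `y` of `f y + g (x - y)` in a ball, locally uniformly in `x`. Being suprema of
continuous affine functions, `f` and `g` are weakly lower semicontinuous, and closed balls are
weakly compact; hence the infimum is attained (so `f □ g` never takes the value `⊥`) and depends
lower semicontinuously on `x`.
-/

noncomputable section
open Filter Topology Pointwise

variable {H : Type*} [NormedAddCommGroup H] [InnerProductSpace ℝ H] [CompleteSpace H]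

/-- An extended-real-valued function `f : H → ℝ ∪ {+∞}` (i.e. never `-∞`) is *proper*
if it is finite at at least one point. -/
def EProper (f : H → EReal) : Prop := (∀ x, f x ≠ ⊥) ∧ (∃ x, f x ≠ ⊤)

/-- The infimal convolution `(f □ g)(x) = ⨅_{y} (f y + g (x - y))`. -/
def infConv (f g : H → EReal) (x : H) : EReal := ⨅ y : H, f y + g (x - y)

/-- The convex conjugate `f*(φ) = ⨆_{x} (⟨φ, x⟩ - f x)`. -/
def conj (f : H → EReal) (φ : H) : EReal := ⨆ x : H, ((inner ℝ φ x : ℝ) : EReal) - f x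

/-- Convexity of an extended-real-valued function (extended-real arithmetic). -/
def EConvexOn (f : H → EReal) : Prop :=
  ∀ x y : H, ∀ t : ℝ, 0 < t → t < 1 →
    f (t • x + (1 - t) • y) ≤ (t : EReal) * f x + ((1 - t : ℝ) : EReal) * f y

/-- Strict convexity: strict inequality whenever `x ≠ y` and both values are finite. -/
def EStrictConvexOn (f : H → EReal) : Prop :=
  ∀ x y : H, x ≠ y → f x ≠ ⊤ → f y ≠ ⊤ → ∀ t : ℝ, 0 < t → t < 1 →
    f (t • x + (1 - t) • y) < (t : EReal) * f x + ((1 - t : ℝ) : EReal) * f y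

/-- `f` is coercive: `f x → +∞` as `‖x‖ → +∞`. -/
def ECoercive (f : H → EReal) : Prop :=
  ∀ M : ℝ, ∃ R : ℝ, ∀ x : H, R ≤ ‖x‖ → (M : EReal) ≤ f x

/-- `f` is supercoercive: `f x / ‖x‖ → +∞` as `‖x‖ → +∞`. -/
def ESupercoercive (f : H → EReal) : Prop :=
  ∀ M : ℝ, ∃ R : ℝ, ∀ x : H, R ≤ ‖x‖ → ((M * ‖x‖ : ℝ) : EReal) ≤ f x

/-- The Moreau envelope `ᵉf(x) = ⨅_{y} (f y + ‖x - y‖² / (2ε))`. -/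
def moreau (ε : ℝ) (f : H → EReal) (x : H) : EReal :=
  ⨅ y : H, f y + ((‖x - y‖ ^ 2 / (2 * ε) : ℝ) : EReal)

/-- `p` is a minimizer of `y ↦ f y + ‖x - y‖²/(2ε)`, i.e. a proximal point of `f` at `x`. -/
def IsProx (ε : ℝ) (f : H → EReal) (x p : H) : Prop :=
  ∀ y : H, f p + ((‖x - p‖ ^ 2 / (2 * ε) : ℝ) : EReal)
    ≤ f y + ((‖x - y‖ ^ 2 / (2 * ε) : ℝ) : EReal)

/-- The subdifferential `∂f(p) = {φ : f p finite and ∀ y, f y ≥ f p + ⟨φ, y - p⟩}`. -/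
def subdiff (f : H → EReal) (p : H) : Set H :=
  {φ : H | f p ≠ ⊤ ∧ ∀ y : H, f p + ((inner ℝ φ (y - p) : ℝ) : EReal) ≤ f y}


open Function Metric InnerProductSpace

theorem lowerSemicontinuous_iInf_of_isCompact_sublevel {X Y : Type*} [TopologicalSpace X]
    [TopologicalSpace Y] {F : X → Y → EReal} (hF : LowerSemicontinuous (uncurry F))
    (hK : ∀ x (t : ℝ), ∃ K, IsCompact K ∧ ∀ᶠ x' in 𝓝 x, ∀ y, F x' y ≤ t → y ∈ K) :
    LowerSemicontinuous fun x ↦ ⨅ y, F x y := by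
  intro x t ht
  obtain ⟨τ, htτ, hτ⟩ := EReal.exists_between_coe_real ht
  obtain ⟨K, hKc, hKx⟩ := hK x τ
  have hnear : ∀ᶠ x' in 𝓝 x, ∀ y ∈ K, (τ : EReal) < F x' y :=
    hKc.eventually_forall_of_forall_eventually fun y _ ↦
      hF (x, y) τ (hτ.trans_le (iInf_le _ y))
  filter_upwards [hnear, hKx] with x' hnear' hKx'
  refine htτ.trans_le (le_iInf fun y ↦ ?_)
  by_contra! hy
  exact (hnear' y (hKx' y hy.le)).not_gt hy

theorem LowerSemicontinuous.exists_forall_le_of_isCompact {Y β : Type*} [TopologicalSpace Y]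
    [LinearOrder β] {f : Y → β} (hf : LowerSemicontinuous f) {K : Set Y} (hK : IsCompact K)
    {y₁ : Y} (hsub : ∀ y, f y ≤ f y₁ → y ∈ K) : ∃ y₀, ∀ y, f y₀ ≤ f y := by
  obtain ⟨y₀, -, hmin⟩ :=
    (hf.lowerSemicontinuousOn K).exists_isMinOn ⟨y₁, hsub y₁ le_rfl⟩ hK
  refine ⟨y₀, fun y ↦ ?_⟩
  by_cases hy : y ∈ K
  · exact hmin hy
  · exact (hmin (hsub y₁ le_rfl)).trans (not_le.1 (mt (hsub y) hy)).le

theorem Continuous.ereal_coe_sub_const {X : Type*} [TopologicalSpace X] {u : X → ℝ}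
    (hu : Continuous u) (c : EReal) : Continuous fun x ↦ (u x : EReal) - c := by
  induction c with
  | bot => simpa [EReal.coe_sub_bot] using continuous_const
  | coe c =>
    simp_rw [← EReal.coe_sub]
    exact continuous_coe_real_ereal.comp (hu.sub continuous_const)
  | top => simpa [EReal.sub_top] using continuous_const

theorem EReal.coe_sub_le_comm {a : ℝ} {b c : EReal} :
    (a : EReal) - b ≤ c ↔ (a : EReal) - c ≤ b := by
  induction b <;> induction c <;> simp [← EReal.coe_sub, EReal.sub_top, add_comm]

def epigraph {α : Type*} (f : α → EReal) : Set (α × ℝ) := {p | f p.1 ≤ p.2}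

theorem isClosed_epigraph {α : Type*} [TopologicalSpace α] {f : α → EReal}
    (hf : LowerSemicontinuous f) : IsClosed (epigraph f) :=
  hf.isClosed_epigraph.preimage
    (continuous_fst.prodMk (continuous_coe_real_ereal.comp continuous_snd))

section WeakTopology

variable {E : Type*} [NormedAddCommGroup E] [InnerProductSpace ℝ E]

theorem continuous_inner_toWeakSpace_symm (φ : E) :
    Continuous fun y : WeakSpace ℝ E ↦ inner ℝ ((toWeakSpace ℝ E).symm y) φ :=
  (WeakBilin.eval_continuous (topDualPairing ℝ E).flip (innerSL ℝ φ)).congr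
    fun _ ↦ (real_inner_comm _ _).symm

/-- Banach–Alaoglu, transported from `WeakDual ℝ E` through the Riesz isomorphism. -/
theorem isCompact_toWeakSpace_closedBall [CompleteSpace E] (x : E) (r : ℝ) :
    IsCompact (toWeakSpace ℝ E '' closedBall x r) := by
  set Φ : WeakDual ℝ E → WeakSpace ℝ E :=
    fun ℓ ↦ toWeakSpace ℝ E ((toDual ℝ E).symm (WeakDual.toStrongDual ℓ))
  have hΦ : Continuous Φ := by
    refine WeakBilin.continuous_of_continuous_eval _ fun ℓ' ↦ ?_
    convert WeakDual.eval_continuous ((toDual ℝ E).symm ℓ') using 2 with ℓ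
    change ℓ' ((toDual ℝ E).symm (WeakDual.toStrongDual ℓ)) =
      WeakDual.toStrongDual ℓ ((toDual ℝ E).symm ℓ')
    rw [← toDual_symm_apply (y := ℓ'), real_inner_comm, toDual_symm_apply]
  have himage : Φ '' (WeakDual.toStrongDual ⁻¹' closedBall (toDual ℝ E x) r) =
      toWeakSpace ℝ E '' closedBall x r := by
    rw [show Φ = toWeakSpace ℝ E ∘ (toDual ℝ E).symm ∘ WeakDual.toStrongDual from rfl,
      Set.image_comp, Set.image_comp, Set.image_preimage_eq _ WeakDual.toStrongDual.surjective,
      LinearIsometryEquiv.image_closedBall, LinearIsometryEquiv.symm_apply_apply]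
  exact himage ▸ (WeakDual.isCompact_closedBall _ r).image hΦ

end WeakTopology

section Conjugate

variable {E : Type*} [NormedAddCommGroup E] [InnerProductSpace ℝ E] {f : E → EReal}

theorem conj_le_iff {φ : E} {c : EReal} :
    conj f φ ≤ c ↔ ∀ x, (inner ℝ φ x : EReal) - c ≤ f x := by
  simp only [conj, iSup_le_iff, EReal.coe_sub_le_comm]

theorem inner_sub_conj_le (φ x : E) : (inner ℝ φ x : EReal) - conj f φ ≤ f x :=
  conj_le_iff.1 le_rfl x

theorem conj_conj_le : conj (conj f) ≤ f := fun x ↦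
  iSup_le fun φ ↦ real_inner_comm φ x ▸ inner_sub_conj_le φ x

theorem conj_ne_bot (hf : ∃ x, f x ≠ ⊤) (φ : E) : conj f φ ≠ ⊥ := by
  obtain ⟨x, hx⟩ := hf
  refine ne_bot_of_le_ne_bot ?_ (le_iSup (fun x ↦ (inner ℝ φ x : EReal) - f x) x)
  simpa [sub_eq_add_neg, EReal.add_ne_bot_iff] using hx

theorem conj_le_of_forall_mem_epigraph {φ : E} {c : ℝ}
    (h : ∀ p ∈ epigraph f, inner ℝ φ p.1 - p.2 ≤ c) : conj f φ ≤ c := by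
  refine conj_le_iff.2 fun x ↦ ?_
  induction hfx : f x with
  | bot =>
    have := h (x, inner ℝ φ x - c - 1) (by simp [epigraph, hfx])
    linarith
  | coe r =>
    have := h (x, r) (by simp [epigraph, hfx])
    rw [← EReal.coe_sub, EReal.coe_le_coe_iff]
    linarith
  | top => exact le_top

theorem inner_sub_le_of_conj_le {φ : E} {c : ℝ} (h : conj f φ ≤ c) {p : E × ℝ}
    (hp : p ∈ epigraph f) : inner ℝ φ p.1 - p.2 ≤ c := by
  have := (conj_le_iff.1 h p.1).trans hp
  rw [← EReal.coe_sub, EReal.coe_le_coe_iff] at this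
  linarith

theorem EConvexOn.convex_epigraph (hf : EConvexOn f) : Convex ℝ (epigraph f) := by
  rintro ⟨y, r⟩ (hy : f y ≤ r) ⟨z, q⟩ (hz : f z ≤ q) a b ha hb hab
  change f (a • y + b • z) ≤ ((a * r + b * q : ℝ) : EReal)
  rcases ha.eq_or_lt with rfl | ha
  · obtain rfl : b = 1 := by linarith
    simpa using hz
  rcases hb.eq_or_lt with rfl | hb
  · obtain rfl : a = 1 := by linarith
    simpa using hy
  obtain rfl : b = 1 - a := by linarith
  calc f (a • y + (1 - a) • z) ≤ (a : EReal) * f y + ((1 - a : ℝ) : EReal) * f z :=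
        hf y z a ha (by linarith)
    _ ≤ (a : EReal) * r + ((1 - a : ℝ) : EReal) * q := by gcongr
    _ = ((a * r + (1 - a) * q : ℝ) : EReal) := by norm_cast

theorem conj_smul_le_of_separation {ψ : E} {s u : ℝ} (hs : s < 0)
    (hsep : ∀ p ∈ epigraph f, inner ℝ ψ p.1 + s * p.2 < u) :
    conj f ((-s)⁻¹ • ψ) ≤ ((u / -s : ℝ) : EReal) := by
  refine conj_le_of_forall_mem_epigraph fun p hp ↦ ?_
  rw [real_inner_smul_left, le_div_iff₀ (neg_pos.2 hs)]
  have : ((-s)⁻¹ * inner ℝ ψ p.1 - p.2) * -s = inner ℝ ψ p.1 + s * p.2 := by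
    field_simp [hs.ne]
    ring
  linarith [hsep p hp]

variable [CompleteSpace E]

/-- The slope `s` is nonpositive because the epigraph is unbounded above. -/
theorem exists_separation_of_lt (hf₁ : LowerSemicontinuous f) (hf₂ : Convex ℝ (epigraph f))
    (hdom : (epigraph f).Nonempty) {x : E} {t : ℝ} (ht : (t : EReal) < f x) :
    ∃ (ψ : E) (s u : ℝ), s ≤ 0 ∧ (∀ p ∈ epigraph f, inner ℝ ψ p.1 + s * p.2 < u) ∧
      u < inner ℝ ψ x + s * t := by
  obtain ⟨ℓ, u, hℓ, hx⟩ := geometric_hahn_banach_closed_point hf₂ (isClosed_epigraph hf₁)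
    (x := (x, t)) (not_le.2 ht)
  set ψ := (toDual ℝ E).symm (ℓ.comp (ContinuousLinearMap.inl ℝ E ℝ))
  have hℓ_apply : ∀ p : E × ℝ, ℓ p = inner ℝ ψ p.1 + ℓ (0, 1) * p.2 := by
    rintro ⟨y, r⟩
    have : ℓ (y, r) = ℓ (y, 0) + r • ℓ (0, 1) := by rw [← map_smul, ← map_add]; simp
    rw [this, toDual_symm_apply, smul_eq_mul, mul_comm]
    rfl
  refine ⟨ψ, ℓ (0, 1), u, ?_, fun p hp ↦ hℓ_apply p ▸ hℓ p hp, hℓ_apply (x, t) ▸ hx⟩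
  obtain ⟨⟨y, r⟩, hyr⟩ := hdom
  by_contra! hs
  set k := |u - ℓ (y, r)| / ℓ (0, 1)
  have hk : (y, r + k) ∈ epigraph f :=
    hyr.trans (EReal.coe_le_coe_iff.2 (le_add_of_nonneg_right (by positivity)))
  have hsk : ℓ (0, 1) * k = |u - ℓ (y, r)| := mul_div_cancel₀ _ hs.ne'
  have h₁ := hℓ_apply (y, r + k)
  have h₂ := hℓ_apply (y, r)
  rw [mul_add, hsk] at h₁
  linarith [hℓ _ hk, le_abs_self (u - ℓ (y, r))]

theorem exists_conj_le (hf₀ : EProper f) (hf₁ : LowerSemicontinuous f)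
    (hf₂ : Convex ℝ (epigraph f)) : ∃ (φ : E) (c : ℝ), conj f φ ≤ c := by
  obtain ⟨x, hx⟩ := hf₀.2
  set r := (f x).toReal
  have hr : f x = r := (EReal.coe_toReal hx (hf₀.1 x)).symm
  obtain ⟨ψ, s, u, -, hsep, hu⟩ := exists_separation_of_lt hf₁ hf₂ ⟨(x, r), hr.le⟩ (t := r - 1)
    (by rw [hr]; exact_mod_cast sub_one_lt r)
  have hs : s < 0 := by linarith [hsep (x, r) hr.le]
  exact ⟨_, _, conj_smul_le_of_separation hs hsep⟩

theorem exists_conj_le_of_lt (hf₀ : EProper f) (hf₁ : LowerSemicontinuous f)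
    (hf₂ : Convex ℝ (epigraph f)) {x : E} {t : ℝ} (ht : (t : EReal) < f x) :
    ∃ (φ : E) (c : ℝ), conj f φ ≤ c ∧ t < inner ℝ φ x - c := by
  obtain ⟨y, hy⟩ := hf₀.2
  obtain ⟨ψ, s, u, hs, hsep, hu⟩ :=
    exists_separation_of_lt hf₁ hf₂ ⟨(y, (f y).toReal), EReal.le_coe_toReal hy⟩ ht
  rcases hs.lt_or_eq with hs | rfl
  · refine ⟨_, _, conj_smul_le_of_separation hs hsep, ?_⟩
    refine lt_of_mul_lt_mul_right ?_ (neg_nonneg.2 hs.le)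
    have : (inner ℝ ((-s)⁻¹ • ψ) x - u / -s) * -s = inner ℝ ψ x - u := by
      rw [real_inner_smul_left]
      field_simp [hs.ne]
      ring
    linarith
  -- a vertical separating hyperplane: tilt an affine minorant of `f` along it
  simp only [zero_mul, add_zero] at hsep hu
  obtain ⟨φ₀, c₀, hφ₀⟩ := exists_conj_le hf₀ hf₁ hf₂
  obtain ⟨n, hn⟩ := exists_nat_gt ((t - (inner ℝ φ₀ x - c₀)) / (inner ℝ ψ x - u))
  rw [div_lt_iff₀ (sub_pos.2 hu)] at hn
  refine ⟨φ₀ + (n : ℝ) • ψ, c₀ + n * u, conj_le_of_forall_mem_epigraph fun p hp ↦ ?_, ?_⟩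
  · have := mul_le_mul_of_nonneg_left (hsep p hp).le n.cast_nonneg
    rw [inner_add_left, real_inner_smul_left]
    linarith [inner_sub_le_of_conj_le hφ₀ hp]
  · rw [inner_add_left, real_inner_smul_left]
    linarith

theorem conj_conj (hf₀ : EProper f) (hf₁ : LowerSemicontinuous f)
    (hf₂ : Convex ℝ (epigraph f)) : conj (conj f) = f := by
  refine le_antisymm conj_conj_le fun x ↦ le_of_forall_lt fun c hc ↦ ?_
  obtain ⟨t, hct, ht⟩ := EReal.exists_between_coe_real hc
  obtain ⟨φ, r, hφ, htφ⟩ := exists_conj_le_of_lt hf₀ hf₁ hf₂ ht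
  calc c < t := hct
    _ < ((inner ℝ φ x - r : ℝ) : EReal) := by exact_mod_cast htφ
    _ ≤ (inner ℝ x φ : EReal) - conj f φ := by
      rw [EReal.coe_sub, real_inner_comm]
      exact EReal.sub_le_sub le_rfl hφ
    _ ≤ conj (conj f) x := le_iSup (fun φ ↦ (inner ℝ x φ : EReal) - conj f φ) φ

theorem lowerSemicontinuous_comp_toWeakSpace_symm (hf₀ : EProper f)
    (hf₁ : LowerSemicontinuous f) (hf₂ : Convex ℝ (epigraph f)) :
    LowerSemicontinuous (f ∘ (toWeakSpace ℝ E).symm) := by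
  rw [← conj_conj hf₀ hf₁ hf₂]
  exact lowerSemicontinuous_iSup fun φ ↦
    ((continuous_inner_toWeakSpace_symm φ).ereal_coe_sub_const _).lowerSemicontinuous

end Conjugate

section InfConv

variable {E : Type*} [NormedAddCommGroup E] {f g : E → EReal}

theorem infConv_add_le (y z : E) : infConv f g (y + z) ≤ f y + g z :=
  (iInf_le _ y).trans_eq (by rw [add_sub_cancel_left])

theorem mem_epigraph_infConv_iff (hf : ∀ x, f x ≠ ⊥) (hg : ∀ x, g x ≠ ⊥) {p : E × ℝ} :
    p ∈ epigraph (infConv f g) ↔ ∀ ε > 0, p + (0, ε) ∈ epigraph f + epigraph g := by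
  refine ⟨fun hp ε hε ↦ ?_, fun h ↦ EReal.le_of_forall_lt_iff_le.1 fun z hz ↦ ?_⟩
  · obtain ⟨y, hy⟩ := iInf_lt_iff.1 ((show infConv f g p.1 ≤ p.2 from hp).trans_lt
      (EReal.coe_lt_coe_iff.2 (lt_add_of_pos_right p.2 hε)))
    have hfy : f y ≠ ⊤ := by
      rintro hfy
      rw [hfy, EReal.top_add_of_ne_bot (hg _)] at hy
      exact not_top_lt hy
    set a := (f y).toReal
    have ha : f y = a := (EReal.coe_toReal hfy (hf y)).symm
    refine ⟨(y, a), ha.le, (p.1 - y, p.2 + ε - a), ?_, by ext <;> simp⟩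
    change g (p.1 - y) ≤ ((p.2 + ε - a : ℝ) : EReal)
    rw [← EReal.add_sub_cancel_left (a := g _) (b := a), EReal.coe_sub]
    exact EReal.sub_le_sub (ha ▸ hy.le) le_rfl
  · obtain ⟨⟨y, a⟩, ha, ⟨w, b⟩, hb, hsum⟩ := h (z - p.2) (sub_pos.2 (EReal.coe_lt_coe_iff.1 hz))
    simp only [Prod.ext_iff, Prod.fst_add, Prod.snd_add, add_zero] at hsum
    calc infConv f g p.1 = infConv f g (y + w) := by rw [hsum.1]
      _ ≤ f y + g w := infConv_add_le y w
      _ ≤ a + b := add_le_add ha hb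
      _ = z := by rw [← EReal.coe_add, hsum.2]; simp

theorem convex_epigraph_infConv [NormedSpace ℝ E] (hf : ∀ x, f x ≠ ⊥) (hg : ∀ x, g x ≠ ⊥)
    (hf₂ : Convex ℝ (epigraph f)) (hg₂ : Convex ℝ (epigraph g)) :
    Convex ℝ (epigraph (infConv f g)) := by
  intro p₁ hp₁ p₂ hp₂ a b ha hb hab
  rw [mem_epigraph_infConv_iff hf hg] at hp₁ hp₂ ⊢
  intro ε hε
  convert (hf₂.add hg₂) (hp₁ ε hε) (hp₂ ε hε) ha hb hab using 1
  ext <;> simp [smul_add, add_add_add_comm, ← add_mul, hab]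

theorem exists_norm_le_of_add_le {a b : ℝ} (ha : 0 ≤ a)
    (hf : ∀ y, ((-(a * ‖y‖) - b : ℝ) : EReal) ≤ f y)
    (hg : ∀ M : ℝ, ∃ R, ∀ z, R ≤ ‖z‖ → ((a * ‖z‖ + M : ℝ) : EReal) ≤ g z) (B c : ℝ) :
    ∃ R, ∀ x y, ‖x‖ ≤ B → f y + g (x - y) ≤ c → ‖y‖ ≤ R := by
  obtain ⟨R, hR⟩ := hg (c + a * B + b + 1)
  refine ⟨B + R, fun x y hx hxy ↦ ?_⟩
  have hy : ‖y‖ ≤ ‖x‖ + ‖x - y‖ := by simpa using norm_sub_le x (x - y)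
  by_contra! hR'
  have := (add_le_add (hf y) (hR (x - y) (by linarith))).trans hxy
  rw [← EReal.coe_add, EReal.coe_le_coe_iff] at this
  nlinarith [mul_le_mul_of_nonneg_left hy ha, mul_le_mul_of_nonneg_left hx ha]

end InfConv

section InfConvConjugate

variable {E : Type*} [NormedAddCommGroup E] [InnerProductSpace ℝ E] {f g : E → EReal}

theorem conj_infConv (hf₀ : EProper f) (hg₀ : EProper g) :
    conj (infConv f g) = conj f + conj g := by
  funext φ
  refine le_antisymm (conj_le_iff.2 fun x ↦ le_iInf fun y ↦ ?_)
    (EReal.add_le_of_forall_lt fun a ha b hb ↦ ?_)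
  · have hf := conj_ne_bot hf₀.2 φ
    have hg := conj_ne_bot hg₀.2 φ
    calc (inner ℝ φ x : EReal) - (conj f + conj g) φ
        = ((inner ℝ φ y : EReal) - conj f φ) + ((inner ℝ φ (x - y) : EReal) - conj g φ) := by
          rw [Pi.add_apply, ← EReal.add_sub_add_comm (.inl hf) (.inr hg), ← EReal.coe_add,
            ← inner_add_right, add_sub_cancel]
      _ ≤ f y + g (x - y) := add_le_add (inner_sub_conj_le _ _) (inner_sub_conj_le _ _)
  · obtain ⟨y, hy⟩ := lt_iSup_iff.1 ha
    obtain ⟨z, hz⟩ := lt_iSup_iff.1 hb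
    calc a + b ≤ ((inner ℝ φ y : EReal) - f y) + ((inner ℝ φ z : EReal) - g z) :=
          add_le_add hy.le hz.le
      _ = (inner ℝ φ (y + z) : EReal) - (f y + g z) := by
          rw [inner_add_right, EReal.coe_add,
            EReal.add_sub_add_comm (.inl (hf₀.1 y)) (.inr (hg₀.1 z))]
      _ ≤ (inner ℝ φ (y + z) : EReal) - infConv f g (y + z) :=
          EReal.sub_le_sub le_rfl (infConv_add_le y z)
      _ ≤ conj (infConv f g) φ := le_iSup (fun x ↦ (inner ℝ φ x : EReal) - infConv f g x) _

variable [CompleteSpace E]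

theorem exists_norm_le_of_coercive (hf₀ : EProper f) (hf₁ : LowerSemicontinuous f)
    (hf₂ : Convex ℝ (epigraph f))
    (hcoer : ESupercoercive g ∨ ((∃ m : ℝ, ∀ x, (m : EReal) ≤ f x) ∧ ECoercive g)) (B c : ℝ) :
    ∃ R, ∀ x y, ‖x‖ ≤ B → f y + g (x - y) ≤ c → ‖y‖ ≤ R := by
  rcases hcoer with hg | ⟨⟨m, hm⟩, hg⟩
  · obtain ⟨φ, b, hφ⟩ := exists_conj_le hf₀ hf₁ hf₂
    refine exists_norm_le_of_add_le (norm_nonneg φ) (b := b) (fun y ↦ ?_) (fun M ↦ ?_) B c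
    · refine le_trans ?_ (conj_le_iff.1 hφ y)
      rw [← EReal.coe_sub, EReal.coe_le_coe_iff]
      linarith [neg_le_of_abs_le (abs_real_inner_le_norm φ y)]
    · obtain ⟨R, hR⟩ := hg (‖φ‖ + 1)
      refine ⟨max R M, fun z hz ↦ le_trans ?_ (hR z (le_of_max_le_left hz))⟩
      exact EReal.coe_le_coe_iff.2 (by nlinarith [le_of_max_le_right hz])
  · refine exists_norm_le_of_add_le le_rfl (b := -m) (fun y ↦ by simpa using hm y)
      (fun M ↦ ?_) B c
    simpa using hg M

end InfConvConjugate

section WeakCompactness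

variable {E : Type*} [NormedAddCommGroup E] [InnerProductSpace ℝ E] {f g : E → EReal}

theorem lowerSemicontinuous_add_comp_sub_weak
    (hfw : LowerSemicontinuous (f ∘ (toWeakSpace ℝ E).symm))
    (hgw : LowerSemicontinuous (g ∘ (toWeakSpace ℝ E).symm))
    (hf : ∀ x, f x ≠ ⊥) (hg : ∀ x, g x ≠ ⊥) :
    LowerSemicontinuous fun p : E × WeakSpace ℝ E ↦
      f ((toWeakSpace ℝ E).symm p.2) + g (p.1 - (toWeakSpace ℝ E).symm p.2) :=
  (hfw.comp continuous_snd).add'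
    (hgw.comp (((toWeakSpaceCLM ℝ E).continuous.comp continuous_fst).sub continuous_snd))
    fun _ ↦ EReal.continuousAt_add (.inr (hg _)) (.inl (hf _))

variable [CompleteSpace E]

theorem exists_isCompact_sublevel_weak
    (hbound : ∀ B c : ℝ, ∃ R, ∀ x y, ‖x‖ ≤ B → f y + g (x - y) ≤ c → ‖y‖ ≤ R)
    (x₀ : E) (t : ℝ) : ∃ K : Set (WeakSpace ℝ E), IsCompact K ∧
      ∀ᶠ x in 𝓝 x₀, ∀ y,
        f ((toWeakSpace ℝ E).symm y) + g (x - (toWeakSpace ℝ E).symm y) ≤ t → y ∈ K := by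
  obtain ⟨R, hR⟩ := hbound (‖x₀‖ + 1) t
  refine ⟨toWeakSpace ℝ E '' closedBall 0 R, isCompact_toWeakSpace_closedBall 0 R, ?_⟩
  filter_upwards [ball_mem_nhds x₀ one_pos] with x hx y hy
  have hx' : ‖x‖ ≤ ‖x₀‖ + 1 := by
    rw [mem_ball_iff_norm] at hx
    linarith [norm_sub_norm_le x x₀]
  exact ⟨(toWeakSpace ℝ E).symm y, mem_closedBall_zero_iff.2 (hR x _ hx' hy), by simp⟩

theorem lowerSemicontinuous_infConv
    (hfw : LowerSemicontinuous (f ∘ (toWeakSpace ℝ E).symm))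
    (hgw : LowerSemicontinuous (g ∘ (toWeakSpace ℝ E).symm))
    (hf : ∀ x, f x ≠ ⊥) (hg : ∀ x, g x ≠ ⊥)
    (hbound : ∀ B c : ℝ, ∃ R, ∀ x y, ‖x‖ ≤ B → f y + g (x - y) ≤ c → ‖y‖ ≤ R) :
    LowerSemicontinuous (infConv f g) :=
  lowerSemicontinuous_iInf_of_isCompact_sublevel (Y := WeakSpace ℝ E)
    (lowerSemicontinuous_add_comp_sub_weak hfw hgw hf hg) (exists_isCompact_sublevel_weak hbound)

theorem exists_infConv_eq
    (hfw : LowerSemicontinuous (f ∘ (toWeakSpace ℝ E).symm))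
    (hgw : LowerSemicontinuous (g ∘ (toWeakSpace ℝ E).symm))
    (hf : ∀ x, f x ≠ ⊥) (hg : ∀ x, g x ≠ ⊥)
    (hbound : ∀ B c : ℝ, ∃ R, ∀ x y, ‖x‖ ≤ B → f y + g (x - y) ≤ c → ‖y‖ ≤ R) (x : E) :
    ∃ y, infConv f g x = f y + g (x - y) := by
  suffices ∃ y, ∀ y', f y + g (x - y) ≤ f y' + g (x - y') from
    this.imp fun y hy ↦ le_antisymm (iInf_le _ y) (le_iInf hy)
  by_cases htop : ∀ y, f y + g (x - y) = ⊤
  · exact ⟨x, fun y ↦ (htop x).trans_le (htop y).ge⟩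
  obtain ⟨y₁, hy₁⟩ := not_forall.1 htop
  have hfin : f y₁ + g (x - y₁) = ((f y₁ + g (x - y₁)).toReal : EReal) :=
    (EReal.coe_toReal hy₁ (EReal.add_ne_bot_iff.2 ⟨hf _, hg _⟩)).symm
  obtain ⟨K, hK, hsub⟩ := exists_isCompact_sublevel_weak hbound x (f y₁ + g (x - y₁)).toReal
  exact ((lowerSemicontinuous_add_comp_sub_weak hfw hgw hf hg).comp
    (Continuous.prodMk_right x)).exists_forall_le_of_isCompact hK (y₁ := toWeakSpace ℝ E y₁)
    fun y hy ↦ hsub.self_of_nhds y (hy.trans hfin.le)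

theorem EProper.infConv (hf₀ : EProper f) (hg₀ : EProper g)
    (hfw : LowerSemicontinuous (f ∘ (toWeakSpace ℝ E).symm))
    (hgw : LowerSemicontinuous (g ∘ (toWeakSpace ℝ E).symm))
    (hbound : ∀ B c : ℝ, ∃ R, ∀ x y, ‖x‖ ≤ B → f y + g (x - y) ≤ c → ‖y‖ ≤ R) :
    EProper (infConv f g) := by
  refine ⟨fun x ↦ ?_, ?_⟩
  · obtain ⟨y, hy⟩ := exists_infConv_eq hfw hgw hf₀.1 hg₀.1 hbound x
    exact hy ▸ EReal.add_ne_bot_iff.2 ⟨hf₀.1 _, hg₀.1 _⟩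
  · obtain ⟨y, hy⟩ := hf₀.2
    obtain ⟨z, hz⟩ := hg₀.2
    exact ⟨y + z, ((infConv_add_le y z).trans_lt (EReal.add_lt_top hy hz)).ne⟩

end WeakCompactness

theorem biconjugate_infConv (f g : H → EReal)
    (hf₀ : EProper f) (hf₁ : LowerSemicontinuous f) (hf₂ : EConvexOn f) (hg₀ : EProper g) (hg₁ : LowerSemicontinuous g) (hg₂ : EConvexOn g)
    (hcoer : ESupercoercive g ∨ ((∃ m : ℝ, ∀ x, (m : EReal) ≤ f x) ∧ ECoercive g)) :
    ∀ x : H, (⨆ φ : H, ((inner ℝ φ x : ℝ) : EReal) - (conj f φ + conj g φ)) = infConv f g x := by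
  intro x
  have hfw := lowerSemicontinuous_comp_toWeakSpace_symm hf₀ hf₁ hf₂.convex_epigraph
  have hgw := lowerSemicontinuous_comp_toWeakSpace_symm hg₀ hg₁ hg₂.convex_epigraph
  have hbound := exists_norm_le_of_coercive hf₀ hf₁ hf₂.convex_epigraph hcoer
  have hconj := conj_conj (hf₀.infConv hg₀ hfw hgw hbound)
    (lowerSemicontinuous_infConv hfw hgw hf₀.1 hg₀.1 hbound)
    (convex_epigraph_infConv hf₀.1 hg₀.1 hf₂.convex_epigraph hg₂.convex_epigraph)
  rw [← congrFun hconj x, conj_infConv hf₀ hg₀]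
  exact iSup_congr fun φ ↦ by rw [real_inner_comm, Pi.add_apply]
end
end

section
/- Let H be a real Hilbert space and let f, g : H → ℝ ∪ {+∞} be proper lower semicontinuous convex functions (f, g ∈ Γ₀(H)). Assume either that g is supercoercive, or that f is bounded from below and g is coercive. Then the infimal convolution is exact: for each x ∈ H there exists x* ∈ H such that (f □ g)(x) = f(x*) + g(x − x*). -/
noncomputable section
open Filter Topology Pointwise

variable {H : Type*} [NormedAddCommGroup H] [InnerProductSpace ℝ H] [CompleteSpace H]

/-
The function `y ↦ f y + g (x - y)` is lower semicontinuous, convex and coercive: in the second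
case because `f` is bounded below, in the first because the supercoercive `g` beats the minorant
`f ≥ c - C‖·‖` that Hahn–Banach separation of a point from the closed convex epigraph of `f`
provides. A coercive lower semicontinuous convex function on a Hilbert space attains its infimum:
its sublevel sets at levels decreasing to the infimum are nested, nonempty, closed, convex and
bounded, and by the parallelogram law their points of minimal norm form a Cauchy sequence, whose
limit is a minimizer.
-/

section

variable {E : Type*} [NormedAddCommGroup E] {f g : E → EReal}

theorem ECoercive.add_comp_const_sub (hg : ECoercive g) {m : ℝ} (hf : ∀ y, (m : EReal) ≤ f y)
    (x : E) : ECoercive fun y => f y + g (x - y) := by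
  intro M
  obtain ⟨R, hR⟩ := hg (M - m)
  refine ⟨R + ‖x‖, fun y hy => ?_⟩
  have hxy : R ≤ ‖x - y‖ := by linarith [norm_sub_rev x y ▸ norm_sub_norm_le y x]
  calc (M : EReal) = (m : EReal) + (M - m : ℝ) := by norm_cast; ring
    _ ≤ f y + g (x - y) := add_le_add (hf y) (hR _ hxy)

theorem ESupercoercive.add_comp_const_sub (hg : ESupercoercive g) {c C : ℝ} (hC : 0 ≤ C)
    (hf : ∀ y, ((c - C * ‖y‖ : ℝ) : EReal) ≤ f y) (x : E) :
    ECoercive fun y => f y + g (x - y) := by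
  intro M
  obtain ⟨R, hR⟩ := hg (C + 1)
  refine ⟨max (R + ‖x‖) (M - c + (C + 1) * ‖x‖), fun y hy => ?_⟩
  have hxy : ‖y‖ - ‖x‖ ≤ ‖x - y‖ := norm_sub_rev x y ▸ norm_sub_norm_le y x
  have hyR := le_max_left (R + ‖x‖) (M - c + (C + 1) * ‖x‖)
  have hyM := le_max_right (R + ‖x‖) (M - c + (C + 1) * ‖x‖)
  have hM : M ≤ c - C * ‖y‖ + (C + 1) * ‖x - y‖ := by nlinarith
  calc (M : EReal) ≤ ((c - C * ‖y‖ : ℝ) : EReal) + ((C + 1) * ‖x - y‖ : ℝ) := by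
        exact_mod_cast hM
    _ ≤ f y + g (x - y) := add_le_add (hf y) (hR _ (by linarith))

end

section

variable {E : Type*} [NormedAddCommGroup E] [InnerProductSpace ℝ E]

theorem norm_sub_sq_le_of_forall_le_norm {s : Set E} (hs : Convex ℝ s) {v w : E}
    (hv : v ∈ s) (hw : w ∈ s) {δ : ℝ} (hδ : 0 ≤ δ) (hδs : ∀ z ∈ s, δ ≤ ‖z‖) :
    ‖v - w‖ ^ 2 ≤ 2 * ‖v‖ ^ 2 + 2 * ‖w‖ ^ 2 - 4 * δ ^ 2 := by
  have hmid : δ ≤ ‖(2⁻¹ : ℝ) • v + (2⁻¹ : ℝ) • w‖ :=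
    hδs _ (hs hv hw (by norm_num) (by norm_num) (by norm_num))
  rw [← smul_add, norm_smul, Real.norm_of_nonneg (by norm_num)] at hmid
  have hsum : (2 * δ) ^ 2 ≤ ‖v + w‖ ^ 2 := pow_le_pow_left₀ (by positivity) (by linarith) 2
  linarith [parallelogram_law_with_norm ℝ v w]

theorem cauchySeq_of_forall_norm_le {C : ℕ → Set E} (hC : Antitone C)
    (hconv : ∀ n, Convex ℝ (C n)) {q : ℕ → E} (hq : ∀ n, q n ∈ C n)
    (hmin : ∀ n, ∀ z ∈ C n, ‖q n‖ ≤ ‖z‖) (hbdd : BddAbove (Set.range fun n => ‖q n‖)) :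
    CauchySeq q := by
  have hmono : Monotone fun n => ‖q n‖ := fun n m hnm => hmin n _ (hC hnm (hq m))
  set D := ⨆ n, ‖q n‖
  have hD : ∀ n, ‖q n‖ ≤ D := le_ciSup hbdd
  have hdist : ∀ n m N, N ≤ n → N ≤ m → dist (q n) (q m) ≤ √(4 * (D ^ 2 - ‖q N‖ ^ 2)) := by
    intro n m N hn hm
    rw [dist_eq_norm, Real.le_sqrt (norm_nonneg _) (by nlinarith [hD N, norm_nonneg (q N)])]
    have := norm_sub_sq_le_of_forall_le_norm (hconv N) (hC hn (hq n)) (hC hm (hq m))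
      (norm_nonneg _) (hmin N)
    nlinarith [hD n, hD m, norm_nonneg (q n), norm_nonneg (q m)]
  refine cauchySeq_of_le_tendsto_0 _ hdist ?_
  have hlim : Tendsto (fun N => 4 * (D ^ 2 - ‖q N‖ ^ 2)) atTop (𝓝 (4 * (D ^ 2 - D ^ 2))) :=
    ((tendsto_atTop_ciSup hmono hbdd).pow 2).const_sub _ |>.const_mul _
  have hsqrt := (Real.continuous_sqrt.tendsto _).comp hlim
  rwa [sub_self, mul_zero, Real.sqrt_zero] at hsqrt

theorem exists_forall_norm_le_of_isClosed_convex [CompleteSpace E] {s : Set E}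
    (hne : s.Nonempty) (hclosed : IsClosed s) (hconv : Convex ℝ s) :
    ∃ v ∈ s, ∀ z ∈ s, ‖v‖ ≤ ‖z‖ := by
  obtain ⟨v, hv, hinf⟩ := exists_norm_eq_iInf_of_complete_convex hne hclosed.isComplete hconv 0
  refine ⟨v, hv, fun z hz => ?_⟩
  have := ciInf_le (f := fun w : s => ‖0 - (w : E)‖) ⟨0, by rintro _ ⟨w, rfl⟩; positivity⟩ ⟨z, hz⟩
  rwa [← hinf, zero_sub, zero_sub, norm_neg, norm_neg] at this

theorem nonempty_iInter_of_antitone_convex [CompleteSpace E] {C : ℕ → Set E} (hC : Antitone C)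
    (hne : ∀ n, (C n).Nonempty) (hclosed : ∀ n, IsClosed (C n)) (hconv : ∀ n, Convex ℝ (C n))
    (hbdd : Bornology.IsBounded (C 0)) : (⋂ n, C n).Nonempty := by
  choose q hq hmin using fun n => exists_forall_norm_le_of_isClosed_convex (hne n) (hclosed n)
    (hconv n)
  obtain ⟨R, hR⟩ := hbdd.exists_norm_le
  have hcauchy := cauchySeq_of_forall_norm_le hC hconv hq hmin
    ⟨R, by rintro _ ⟨n, rfl⟩; exact hR _ (hC n.zero_le (hq n))⟩
  obtain ⟨p, hp⟩ := cauchySeq_tendsto_of_complete hcauchy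
  refine ⟨p, Set.mem_iInter.2 fun N => (hclosed N).mem_of_tendsto hp ?_⟩
  filter_upwards [eventually_ge_atTop N] with n hn using hC hn (hq n)

namespace EConvexOn

variable {f g : E → EReal}

theorem apply_le_of_le (hf : EConvexOn f) {x y : E} {a b : EReal} (hx : f x ≤ a) (hy : f y ≤ b)
    {t : ℝ} (ht₀ : 0 < t) (ht₁ : t < 1) :
    f (t • x + (1 - t) • y) ≤ t * a + (1 - t : ℝ) * b :=
  (hf x y t ht₀ ht₁).trans <| add_le_add
    (mul_le_mul_of_nonneg_left hx (by exact_mod_cast ht₀.le))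
    (mul_le_mul_of_nonneg_left hy (by exact_mod_cast (sub_pos.2 ht₁).le))

theorem convex_le (hf : EConvexOn f) (c : EReal) : Convex ℝ {x | f x ≤ c} := by
  refine convex_iff_forall_pos.2 fun x hx y hy t s ht hs hts => ?_
  obtain rfl : s = 1 - t := by linarith
  refine (hf.apply_le_of_le hx hy ht (by linarith)).trans_eq ?_
  rw [← EReal.right_distrib_of_nonneg (by exact_mod_cast ht.le) (by exact_mod_cast hs.le),
    ← EReal.coe_add, add_sub_cancel, EReal.coe_one, one_mul]

theorem convex_epigraph_s5 (hf : EConvexOn f) : Convex ℝ {p : E × ℝ | f p.1 ≤ p.2} := by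
  refine convex_iff_forall_pos.2 fun p hp q hq t s ht hs hts => ?_
  obtain rfl : s = 1 - t := by linarith
  refine (hf.apply_le_of_le hp hq ht (by linarith)).trans_eq ?_
  simp only [Prod.snd_add, Prod.smul_snd, smul_eq_mul]
  norm_cast

theorem add (hf : EConvexOn f) (hg : EConvexOn g) : EConvexOn fun x => f x + g x := by
  intro x y t ht₀ ht₁
  have h1t : (0 : EReal) ≤ (1 - t : ℝ) := by exact_mod_cast (sub_pos.2 ht₁).le
  rw [EReal.left_distrib_of_nonneg_of_ne_top (by exact_mod_cast ht₀.le) (EReal.coe_ne_top t),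
    EReal.left_distrib_of_nonneg_of_ne_top h1t (EReal.coe_ne_top _), add_add_add_comm]
  exact add_le_add (hf x y t ht₀ ht₁) (hg x y t ht₀ ht₁)

theorem comp_const_sub (hg : EConvexOn g) (x : E) : EConvexOn fun y => g (x - y) := by
  intro y z t ht₀ ht₁
  convert hg (x - y) (x - z) t ht₀ ht₁ using 2
  rw [smul_sub, smul_sub, sub_add_sub_comm, ← add_smul, add_sub_cancel, one_smul]

theorem exists_norm_minorant (hf : EConvexOn f) (hbot : ∀ x, f x ≠ ⊥)
    (hlsc : LowerSemicontinuous f) :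
    ∃ c C : ℝ, 0 ≤ C ∧ ∀ y, ((c - C * ‖y‖ : ℝ) : EReal) ≤ f y := by
  by_cases htop : ∀ y, f y = ⊤
  · exact ⟨0, 0, le_rfl, fun y => (htop y).symm ▸ le_top⟩
  push Not at htop
  obtain ⟨x₀, hx₀⟩ := htop
  set epi : Set (E × ℝ) := {p | f p.1 ≤ p.2}
  have hclosed : IsClosed epi :=
    hlsc.isClosed_epigraph.preimage (continuous_fst.prodMk (continuous_coe_real_ereal.comp
      continuous_snd))
  have hfx₀ : f x₀ = (f x₀).toReal := (EReal.coe_toReal hx₀ (hbot x₀)).symm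
  have hout : (x₀, (f x₀).toReal - 1) ∉ epi := by
    simp only [epi, Set.mem_ofPred_eq, not_le]
    rw [hfx₀]
    exact_mod_cast sub_one_lt _
  obtain ⟨ℓ, u, hℓ, hℓout⟩ := geometric_hahn_banach_closed_point hf.convex_epigraph_s5 hclosed hout
  set φ := ℓ.comp (ContinuousLinearMap.inl ℝ E ℝ)
  set a := ℓ (0, 1)
  have hℓ_apply : ∀ y t, ℓ (y, t) = φ y + t * a := fun y t => by
    rw [show ((y, t) : E × ℝ) = (y, 0) + t • (0, 1) by simp, map_add, map_smul, smul_eq_mul]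
    rfl
  have ha : a < 0 := by
    have := hℓ (x₀, (f x₀).toReal) (le_of_eq hfx₀)
    rw [hℓ_apply] at this hℓout
    linarith
  refine ⟨u / a, ‖φ‖ / -a, div_nonneg (norm_nonneg _) (by linarith), fun y => ?_⟩
  by_cases hy : f y = ⊤
  · exact hy ▸ le_top
  have hfy : f y = (f y).toReal := (EReal.coe_toReal hy (hbot y)).symm
  have hsep := hℓ (y, (f y).toReal) (le_of_eq hfy)
  rw [hℓ_apply] at hsep
  have hφy := neg_le_of_abs_le ((φ.le_opNorm y).trans_eq' (Real.norm_eq_abs _).symm)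
  have hCy : a * (‖φ‖ / -a * ‖y‖) = -(‖φ‖ * ‖y‖) := by field_simp [ha.ne]
  rw [hfy, EReal.coe_le_coe_iff, div_sub' ha.ne, div_le_iff_of_neg ha, hCy]
  linarith

theorem exists_forall_le_of_eCoercive [CompleteSpace E] (hf : EConvexOn f)
    (hlsc : LowerSemicontinuous f) (hcoer : ECoercive f) : ∃ p, ∀ y, f p ≤ f y := by
  rcases (iInf_le f 0).eq_or_lt with hμ | hμ
  · exact ⟨0, fun y => hμ ▸ iInf_le f y⟩
  obtain ⟨u, hu_anti, hu_mem, hu_lim⟩ := exists_seq_strictAnti_tendsto' hμ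
  obtain ⟨M, huM, -⟩ := EReal.exists_between_coe_real (hu_mem 0).2
  obtain ⟨R, hR⟩ := hcoer M
  have hbdd : Bornology.IsBounded {y | f y ≤ u 0} := by
    refine (Metric.isBounded_closedBall (x := 0) (r := R)).subset fun y hy => ?_
    rw [mem_closedBall_zero_iff]
    by_contra! hyR
    exact (hR y hyR.le).not_gt (lt_of_le_of_lt hy huM)
  obtain ⟨p, hp⟩ := nonempty_iInter_of_antitone_convex
    (C := fun n => {y | f y ≤ u n}) (fun n m hnm y hy => hy.trans (hu_anti.antitone hnm))
    (fun n => (iInf_lt_iff.1 (hu_mem n).1).imp fun y hy => hy.le)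
    (fun n => hlsc.isClosed_preimage (u n)) (fun n => hf.convex_le (u n)) hbdd
  exact ⟨p, fun y => (ge_of_tendsto' hu_lim (Set.mem_iInter.1 hp)).trans (iInf_le f y)⟩

end EConvexOn

end

theorem infConv_exact (f g : H → EReal)
    (hf₀ : EProper f) (hf₁ : LowerSemicontinuous f) (hf₂ : EConvexOn f) (hg₀ : EProper g) (hg₁ : LowerSemicontinuous g) (hg₂ : EConvexOn g)
    (hcoer : ESupercoercive g ∨ ((∃ m : ℝ, ∀ x, (m : EReal) ≤ f x) ∧ ECoercive g)) :
    ∀ x : H, ∃ xs : H, infConv f g x = f xs + g (x - xs) := by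
  intro x
  have hlsc : LowerSemicontinuous fun y => f y + g (x - y) :=
    hf₁.add' (hg₁.comp (continuous_const.sub continuous_id)) fun y =>
      EReal.continuousAt_add (.inr (hg₀.1 _)) (.inl (hf₀.1 y))
  have hcoer' : ECoercive fun y => f y + g (x - y) := by
    rcases hcoer with hsuper | ⟨⟨m, hm⟩, hcoer⟩
    · obtain ⟨c, C, hC, hfc⟩ := hf₂.exists_norm_minorant hf₀.1 hf₁
      exact hsuper.add_comp_const_sub hC hfc x
    · exact hcoer.add_comp_const_sub hm x
  obtain ⟨p, hp⟩ := (hf₂.add (hg₂.comp_const_sub x)).exists_forall_le_of_eCoercive hlsc hcoer'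
  exact ⟨p, le_antisymm (iInf_le _ p) (le_iInf hp)⟩
end
end

section
/- Let H be a real Hilbert space and let f : H → ℝ ∪ {+∞} be a proper lower semicontinuous convex function (f ∈ Γ₀(H)). Then for every x ∈ H, the Moreau envelope converges pointwise to f from below as ε → 0⁺: ^εf(x) is nondecreasing as ε decreases and lim_{ε→0⁺} ^εf(x) = sup_{ε>0} ^εf(x) = f(x), the limit taken in the extended reals (the statement holds even when f(x) = +∞). -/
/-!
Taking `y = x` gives `ᵋf x ≤ f x`, and the penalty `‖x - y‖² / (2ε)` grows as `ε` decreases, so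
the envelope increases as `ε ↓ 0`. For the lower bound, separating a point below the graph from the
closed convex epigraph (Hahn–Banach) gives a continuous affine minorant `ψ + c` of `f`. Given
`r < f x`, lower semicontinuity gives `f > r` on a ball `B(x, δ)`; outside it the minorant decreases
at most linearly in `‖x - y‖`, while the penalty is at least `δ² / (2ε) → ∞`, so `ᵋf x ≥ r` for all
small `ε`.
-/

noncomputable section
open Filter Topology Pointwise

variable {H : Type*} [NormedAddCommGroup H] [InnerProductSpace ℝ H] [CompleteSpace H]

section Epigraph

variable {E : Type*}

def realEpigraph (f : E → EReal) : Set (E × ℝ) := {p | f p.1 ≤ p.2}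

theorem LowerSemicontinuous.isClosed_realEpigraph [TopologicalSpace E] {f : E → EReal}
    (hf : LowerSemicontinuous f) : IsClosed (realEpigraph f) :=
  hf.isClosed_epigraph.preimage
    (continuous_fst.prodMk (continuous_coe_real_ereal.comp continuous_snd))

theorem EConvexOn.convex_realEpigraph [NormedAddCommGroup E] [InnerProductSpace ℝ E]
    {f : E → EReal} (hf : EConvexOn f) : Convex ℝ (realEpigraph f) := by
  rw [convex_iff_forall_pos]
  rintro ⟨y₁, t₁⟩ (h₁ : f y₁ ≤ t₁) ⟨y₂, t₂⟩ (h₂ : f y₂ ≤ t₂) a b ha hb hab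
  obtain rfl : b = 1 - a := by linarith
  show f (a • y₁ + (1 - a) • y₂) ≤ ((a * t₁ + (1 - a) * t₂ : ℝ) : EReal)
  calc f (a • y₁ + (1 - a) • y₂) ≤ (a : EReal) * f y₁ + ((1 - a : ℝ) : EReal) * f y₂ :=
        hf y₁ y₂ a ha (by linarith)
    _ ≤ (a : EReal) * t₁ + ((1 - a : ℝ) : EReal) * t₂ :=
        add_le_add (mul_le_mul_of_nonneg_left h₁ (by exact_mod_cast ha.le))
          (mul_le_mul_of_nonneg_left h₂ (by exact_mod_cast hb.le))
    _ = ((a * t₁ + (1 - a) * t₂ : ℝ) : EReal) := by norm_cast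

theorem exists_continuousLinearMap_add_const_le [AddCommGroup E] [TopologicalSpace E]
    [IsTopologicalAddGroup E] [Module ℝ E] [ContinuousSMul ℝ E] [LocallyConvexSpace ℝ E]
    {f : E → EReal} (hconv : Convex ℝ (realEpigraph f)) (hcl : IsClosed (realEpigraph f))
    {x₀ : E} (hbot : f x₀ ≠ ⊥) (htop : f x₀ ≠ ⊤) :
    ∃ (ψ : E →L[ℝ] ℝ) (c : ℝ), ∀ y, ((ψ y + c : ℝ) : EReal) ≤ f y := by
  set r₀ := (f x₀).toReal
  have hr₀ : f x₀ = r₀ := (EReal.coe_toReal htop hbot).symm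
  have hbelow : (x₀, r₀ - 1) ∉ realEpigraph f := by
    show ¬ f x₀ ≤ ((r₀ - 1 : ℝ) : EReal)
    rw [hr₀, EReal.coe_le_coe_iff, not_le]
    exact sub_one_lt r₀
  obtain ⟨L, u, hLu, hsep⟩ := geometric_hahn_banach_point_closed hconv hcl hbelow
  set φ := L.comp (ContinuousLinearMap.inl ℝ E ℝ)
  set a := L (0, 1)
  have hL (y : E) (t : ℝ) : L (y, t) = φ y + t * a := by
    have hyt : ((y, t) : E × ℝ) = (y, 0) + t • (0, 1) := by simp
    rw [hyt, map_add, map_smul, smul_eq_mul]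
    rfl
  have ha : 0 < a := by
    have := hsep (x₀, r₀) (by simp [realEpigraph, hr₀])
    rw [hL] at this hLu
    linarith
  refine ⟨-a⁻¹ • φ, u / a, fun y => le_of_forall_gt_imp_ge_of_dense fun t ht => ?_⟩
  obtain ⟨s, hys, hst⟩ := EReal.exists_between_coe_real ht
  have hsep_y := hsep (y, s) (show f y ≤ s from hys.le)
  rw [hL] at hsep_y
  have hval : (-a⁻¹ • φ) y + u / a = (u - φ y) / a := by
    change -a⁻¹ * φ y + u / a = _
    ring
  have : (-a⁻¹ • φ) y + u / a < s := by
    rw [hval, div_lt_iff₀ ha]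
    linarith
  exact (EReal.coe_lt_coe_iff.2 this).le.trans hst.le

end Epigraph

section Moreau

variable {E : Type*} [NormedAddCommGroup E]

theorem moreau_le_self (ε : ℝ) (f : E → EReal) (x : E) : moreau ε f x ≤ f x := by
  refine (iInf_le _ x).trans_eq ?_
  simp

theorem moreau_antitoneOn (f : E → EReal) (x : E) :
    AntitoneOn (fun ε => moreau ε f x) (Set.Ioi 0) := fun ε₁ hε₁ _ _ hε =>
  iInf_mono fun _ => add_le_add_right (EReal.coe_le_coe_iff.2
    (div_le_div_of_nonneg_left (sq_nonneg _) (by simpa using hε₁) (by linarith))) _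

theorem monotoneOn_sq_div_sub_mul {ε : ℝ} (hε : 0 < ε) (K : ℝ) :
    MonotoneOn (fun t : ℝ => t ^ 2 / (2 * ε) - K * t) (Set.Ici (ε * K)) := by
  intro s (hs : ε * K ≤ s) t _ hst
  have hdiff : t ^ 2 / (2 * ε) - K * t - (s ^ 2 / (2 * ε) - K * s)
      = (t - s) * (s + t - 2 * (ε * K)) / (2 * ε) := by
    field_simp
    ring
  have : 0 ≤ (t - s) * (s + t - 2 * (ε * K)) / (2 * ε) :=
    div_nonneg (mul_nonneg (by linarith) (by linarith)) (by positivity)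
  dsimp only
  linarith

variable [NormedSpace ℝ E] {f : E → EReal} {ψ : E →L[ℝ] ℝ} {c : ℝ}

theorem eventually_coe_le_moreau (hψ : ∀ y, ((ψ y + c : ℝ) : EReal) ≤ f y) {x : E}
    (hf : LowerSemicontinuousAt f x) {r : ℝ} (hr : (r : EReal) < f x) :
    ∀ᶠ ε in 𝓝[>] 0, (r : EReal) ≤ moreau ε f x := by
  obtain ⟨δ, hδ, hnear⟩ := Metric.eventually_nhds_iff.1 (hf r hr)
  set K := ‖ψ‖
  have hvertex : ∀ᶠ ε in 𝓝[>] 0, ε * K ≤ δ :=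
    nhdsWithin_le_nhds (((continuous_mul_const K).tendsto' 0 0 (zero_mul K)).eventually
      (eventually_le_nhds hδ))
  have hpenalty : ∀ᶠ ε in 𝓝[>] (0 : ℝ), r - (ψ x + c) + K * δ ≤ δ ^ 2 / (2 * ε) :=
    ((tendsto_inv_nhdsGT_zero.const_mul_atTop (by positivity : (0 : ℝ) < δ ^ 2 / 2)
      ).eventually_ge_atTop _).mono fun ε h => h.trans_eq (by ring)
  filter_upwards [self_mem_nhdsWithin, hvertex, hpenalty] with ε (hε : 0 < ε) hεK hεδ
  refine le_iInf fun y => ?_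
  rcases lt_or_ge (dist y x) δ with hy | hy
  · exact (hnear hy).le.trans (le_add_of_nonneg_right (EReal.coe_nonneg.2 (by positivity)))
  · rw [dist_comm, dist_eq_norm] at hy
    have hψy : ψ x - K * ‖x - y‖ ≤ ψ y := by
      have := (le_abs_self _).trans (ψ.le_opNorm (x - y))
      rw [map_sub] at this
      linarith
    have hfar := monotoneOn_sq_div_sub_mul hε K hεK (hεK.trans hy) hy
    have : r ≤ ψ y + c + ‖x - y‖ ^ 2 / (2 * ε) := by
      dsimp only at hfar
      linarith
    calc (r : EReal) ≤ ((ψ y + c : ℝ) : EReal) + ((‖x - y‖ ^ 2 / (2 * ε) : ℝ) : EReal) := by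
          exact_mod_cast this
      _ ≤ f y + ((‖x - y‖ ^ 2 / (2 * ε) : ℝ) : EReal) := add_le_add_left (hψ y) _

theorem tendsto_moreau_nhdsGT_zero (hψ : ∀ y, ((ψ y + c : ℝ) : EReal) ≤ f y) {x : E}
    (hf : LowerSemicontinuousAt f x) :
    Tendsto (fun ε => moreau ε f x) (𝓝[>] 0) (𝓝 (f x)) := by
  refine tendsto_order.2 ⟨fun b hb => ?_, fun b hb =>
    Eventually.of_forall fun ε => (moreau_le_self ε f x).trans_lt hb⟩
  obtain ⟨r, hbr, hrf⟩ := EReal.exists_between_coe_real hb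
  exact (eventually_coe_le_moreau hψ hf hrf).mono fun ε h => hbr.trans_le h

theorem iSup_moreau_eq (hψ : ∀ y, ((ψ y + c : ℝ) : EReal) ≤ f y) {x : E}
    (hf : LowerSemicontinuousAt f x) :
    (⨆ ε : ℝ, ⨆ _ : 0 < ε, moreau ε f x) = f x :=
  le_antisymm (iSup₂_le fun ε _ => moreau_le_self ε f x)
    (le_of_tendsto (tendsto_moreau_nhdsGT_zero hψ hf) <| by
      filter_upwards [self_mem_nhdsWithin (s := Set.Ioi (0 : ℝ))] with ε (hε : 0 < ε)
      exact le_iSup₂ (f := fun ε (_ : 0 < ε) => moreau ε f x) ε hε)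

end Moreau

theorem moreau_tendsto_of_eps (f : H → EReal)
    (hf₀ : EProper f) (hf₁ : LowerSemicontinuous f) (hf₂ : EConvexOn f) (x : H) :
    (∀ ε₁ ε₂ : ℝ, 0 < ε₁ → ε₁ ≤ ε₂ → moreau ε₂ f x ≤ moreau ε₁ f x) ∧
    (⨆ ε : ℝ, ⨆ _ : 0 < ε, moreau ε f x) = f x ∧
    Tendsto (fun ε : ℝ => moreau ε f x) (𝓝[>] 0) (𝓝 (f x)) := by
  obtain ⟨x₀, hx₀⟩ := hf₀.2
  obtain ⟨ψ, c, hψ⟩ := exists_continuousLinearMap_add_const_le hf₂.convex_realEpigraph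
    hf₁.isClosed_realEpigraph (hf₀.1 x₀) hx₀
  exact ⟨fun ε₁ ε₂ h₁ h₁₂ => moreau_antitoneOn f x h₁ (h₁.trans_le h₁₂) h₁₂,
    iSup_moreau_eq hψ (hf₁ x), tendsto_moreau_nhdsGT_zero hψ (hf₁ x)⟩
end
end

section
/- Let H be a real Hilbert space, let f : H → ℝ ∪ {+∞} be a proper lower semicontinuous convex function (f ∈ Γ₀(H)), and let ε > 0. Then the Moreau envelope ^εf is Fréchet differentiable at every point: for every x ∈ H there exists ∇^εf(x) ∈ H such that ^εf(x + h) = ^εf(x) + ⟨∇^εf(x), h⟩ + o(‖h‖) as h → 0 in H. -/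
noncomputable section
open Filter Topology Pointwise

variable {H : Type*} [NormedAddCommGroup H] [InnerProductSpace ℝ H] [CompleteSpace H]

/-! A proper lower semicontinuous convex `f` lies above some `c - β ‖y‖` (separate a point below
its graph from the closed convex epigraph), so the envelope `e` is finite. The objective
`y ↦ f y + ‖x - y‖² / (2ε)` is strongly convex, so its sublevel sets just above the infimum are
closed with diameters tending to `0`, and by completeness they meet in a minimizer `p`. Then
`(x - p)/ε` is a subgradient of `f` at `p`, which gives the envelope the supporting bound
`e z ≥ e x + ⟪(x - p)/ε, z - x⟫`, while testing the infimum defining `e z` at `p` gives the same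
bound plus `‖z - x‖² / (2ε)`. Squeezed quadratically around an affine map, `e` is differentiable. -/

open scoped InnerProductSpace

theorem hasFDerivAt_of_norm_sub_le_mul_sq {𝕜 E F : Type*} [NontriviallyNormedField 𝕜]
    [NormedAddCommGroup E] [NormedSpace 𝕜 E] [NormedAddCommGroup F] [NormedSpace 𝕜 F]
    {φ : E → F} {L : E →L[𝕜] F} {x : E} (C : ℝ)
    (hφ : ∀ z, ‖φ z - φ x - L (z - x)‖ ≤ C * ‖z - x‖ ^ 2) : HasFDerivAt φ L x := by
  rw [hasFDerivAt_iff_isLittleO_nhds_zero]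
  refine (Asymptotics.IsBigO.of_bound C (Eventually.of_forall fun h => ?_)).trans_isLittleO
    (Asymptotics.isLittleO_norm_pow_id one_lt_two)
  simpa using hφ (x + h)

theorem le_of_forall_mem_Ioo_le_add_mul {a b c : ℝ} (h : ∀ t ∈ Set.Ioo (0 : ℝ) 1, a ≤ b + t * c) :
    a ≤ b := by
  have hcont : Continuous fun t : ℝ => b + t * c := by fun_prop
  have hlim : Tendsto (fun t => b + t * c) (𝓝[>] 0) (𝓝 b) :=
    (hcont.tendsto' 0 b (by simp)).mono_left nhdsWithin_le_nhds
  exact ge_of_tendsto hlim (eventually_of_mem (Ioo_mem_nhdsGT one_pos) h)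

theorem LowerSemicontinuous.exists_forall_le_of_sublevel_dist_sq_le {X : Type*} [MetricSpace X]
    [CompleteSpace X] {Φ : X → EReal} (hΦ : LowerSemicontinuous Φ) {m : ℝ} (hm : ⨅ y, Φ y = m)
    {C : ℝ} (hC : ∀ δ y z, Φ y ≤ ((m + δ : ℝ) : EReal) → Φ z ≤ ((m + δ : ℝ) : EReal) →
      dist y z ^ 2 ≤ C * δ) :
    ∃ p, ∀ y, Φ p ≤ Φ y := by
  set s : ℕ → Set X := fun n => Φ ⁻¹' Set.Iic ((m + 1 / (n + 1) : ℝ) : EReal)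
  have hdist : ∀ n, ∀ y ∈ s n, ∀ z ∈ s n, dist y z ≤ √(C * (1 / (n + 1))) :=
    fun n y hy z hz => Real.le_sqrt_of_sq_le (hC _ y z hy hz)
  have hne : ∀ n, (s n).Nonempty := fun n => by
    have : ((m : ℝ) : EReal) < ((m + 1 / (n + 1) : ℝ) : EReal) :=
      EReal.coe_lt_coe_iff.2 (lt_add_of_pos_right m Nat.one_div_pos_of_nat)
    obtain ⟨y, hy⟩ := iInf_lt_iff.1 (hm ▸ this)
    exact ⟨y, hy.le⟩
  have hanti : ∀ N, s N ⊆ ⋂ n ≤ N, s n := fun N => Set.subset_iInter₂ fun n hn y hy =>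
    le_trans hy (EReal.coe_le_coe_iff.2 (by gcongr))
  have hlim : Tendsto (fun n : ℕ => √(C * (1 / (n + 1)))) atTop (𝓝 0) := by
    simpa using (tendsto_one_div_add_atTop_nhds_zero_nat.const_mul C).sqrt
  obtain ⟨p, hp⟩ := Metric.nonempty_iInter_of_nonempty_biInter
    (fun n => hΦ.isClosed_preimage _) (fun n => Metric.isBounded_iff.2 ⟨_, hdist n⟩)
    (fun N => (hne N).mono (hanti N))
    (squeeze_zero (fun n => Metric.diam_nonneg)
      (fun n => Metric.diam_le_of_forall_dist_le (Real.sqrt_nonneg _) (hdist n)) hlim)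
  refine ⟨p, fun y => le_trans ?_ (hm ▸ iInf_le Φ y)⟩
  refine EReal.le_of_forall_lt_iff_le.1 fun r hr => ?_
  obtain ⟨n, hn⟩ := exists_nat_one_div_lt (sub_pos.2 (EReal.coe_lt_coe_iff.1 hr))
  exact (Set.mem_iInter.1 hp n).trans (EReal.coe_le_coe_iff.2 (by linarith))

theorem exists_norm_minorant {E : Type*} [NormedAddCommGroup E] [NormedSpace ℝ E] {f : E → EReal}
    (hconv : Convex ℝ {p : E × ℝ | f p.1 ≤ p.2}) (hlsc : LowerSemicontinuous f) {x₀ : E} {r₀ : ℝ}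
    (hx₀ : f x₀ = r₀) :
    ∃ c β : ℝ, 0 ≤ β ∧ ∀ y, ((c - β * ‖y‖ : ℝ) : EReal) ≤ f y := by
  have hclosed : IsClosed {p : E × ℝ | f p.1 ≤ p.2} :=
    hlsc.isClosed_epigraph.preimage (continuous_id.prodMap continuous_coe_real_ereal)
  have hout : (x₀, r₀ - 1) ∉ {p : E × ℝ | f p.1 ≤ p.2} := by
    simp only [Set.mem_ofPred_eq, hx₀, EReal.coe_le_coe_iff, not_le]
    linarith
  obtain ⟨φ, u, hlt, hgt⟩ := geometric_hahn_banach_point_closed hconv hclosed hout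
  have hφ : ∀ y s, φ (y, s) = φ (y, 0) + s * φ (0, 1) := fun y s => by
    rw [← smul_eq_mul, ← map_smul, ← map_add]
    simp
  have hb : 0 < φ (0, 1) := by
    have := hgt (x₀, r₀) (by simp [hx₀])
    rw [hφ] at hlt this
    linarith
  refine ⟨u / φ (0, 1), ‖φ‖ / φ (0, 1), by positivity,
    fun y => EReal.le_of_forall_lt_iff_le.1 fun s hs => ?_⟩
  have hus := hgt (y, s) (show f y ≤ s from hs.le)
  have hφy : φ (y, 0) ≤ ‖φ‖ * ‖y‖ := by
    simpa using (le_abs_self _).trans (φ.le_opNorm (y, 0))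
  rw [hφ] at hus
  rw [EReal.coe_le_coe_iff, div_mul_eq_mul_div, ← sub_div, div_le_iff₀ hb]
  linarith

section Moreau

variable {E : Type*} [NormedAddCommGroup E] {f : E → EReal} {ε : ℝ}

def moreauObjective (ε : ℝ) (f : E → EReal) (x y : E) : EReal :=
  f y + ((‖x - y‖ ^ 2 / (2 * ε) : ℝ) : EReal)

theorem IsProx.moreau_eq {x p : E} (hp : IsProx ε f x p) :
    moreau ε f x = moreauObjective ε f x p :=
  le_antisymm (iInf_le _ p) (le_iInf hp)

theorem moreau_ne_top {x₀ : E} (hx₀ : f x₀ ≠ ⊤) (x : E) : moreau ε f x ≠ ⊤ :=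
  ne_top_of_le_ne_top (EReal.add_ne_top hx₀ (EReal.coe_ne_top _)) (iInf_le _ x₀)

theorem coe_le_moreau {c β : ℝ} (hβ : 0 ≤ β) (hmin : ∀ y, ((c - β * ‖y‖ : ℝ) : EReal) ≤ f y)
    (hε : 0 < ε) (x : E) : ((c - β * ‖x‖ - β ^ 2 * ε / 2 : ℝ) : EReal) ≤ moreau ε f x := by
  refine le_iInf fun y => ?_
  have htri : ‖y‖ ≤ ‖x‖ + ‖x - y‖ := by
    simpa using norm_sub_le x (x - y)
  have hamgm : β * ‖x - y‖ ≤ ‖x - y‖ ^ 2 / (2 * ε) + β ^ 2 * ε / 2 := by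
    rw [div_add' _ _ _ (by positivity), le_div_iff₀ (by positivity)]
    nlinarith [sq_nonneg (‖x - y‖ - β * ε)]
  calc ((c - β * ‖x‖ - β ^ 2 * ε / 2 : ℝ) : EReal)
      ≤ ((c - β * ‖y‖ : ℝ) : EReal) + ((‖x - y‖ ^ 2 / (2 * ε) : ℝ) : EReal) := by
        rw [← EReal.coe_add, EReal.coe_le_coe_iff]
        nlinarith
    _ ≤ moreauObjective ε f x y := add_le_add_left (hmin y) _

theorem moreauObjective_lowerSemicontinuous (hlsc : LowerSemicontinuous f) (x : E) :
    LowerSemicontinuous (moreauObjective ε f x) :=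
  hlsc.add' (continuous_coe_real_ereal.comp (by fun_prop)).lowerSemicontinuous fun _ =>
    EReal.continuousAt_add (.inr (EReal.coe_ne_bot _)) (.inr (EReal.coe_ne_top _))

variable [InnerProductSpace ℝ E]

theorem EConvexOn.le_coe_of_le_coe (hf : EConvexOn f) {x y : E} {a b t : ℝ} (hx : f x ≤ a)
    (hy : f y ≤ b) (ht₀ : 0 < t) (ht₁ : t < 1) :
    f (t • x + (1 - t) • y) ≤ ((t * a + (1 - t) * b : ℝ) : EReal) := by
  rw [EReal.coe_add, EReal.coe_mul, EReal.coe_mul]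
  exact (hf x y t ht₀ ht₁).trans (add_le_add
    (mul_le_mul_of_nonneg_left hx (EReal.coe_nonneg.2 ht₀.le))
    (mul_le_mul_of_nonneg_left hy (EReal.coe_nonneg.2 (sub_nonneg.2 ht₁.le))))

theorem EConvexOn.convex_epigraph_s12 (hf : EConvexOn f) : Convex ℝ {p : E × ℝ | f p.1 ≤ p.2} := by
  refine convex_iff_forall_pos.2 fun ⟨y, s⟩ hy ⟨z, t⟩ hz a b ha hb hab => ?_
  obtain rfl : b = 1 - a := by linarith
  exact hf.le_coe_of_le_coe hy hz ha (by linarith)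

theorem norm_sub_midpoint_sq (x y z : E) :
    ‖x - ((1 / 2 : ℝ) • y + (1 - 1 / 2 : ℝ) • z)‖ ^ 2
      = (‖x - y‖ ^ 2 + ‖x - z‖ ^ 2) / 2 - ‖y - z‖ ^ 2 / 4 := by
  have h := EuclideanGeometry.dist_sq_add_dist_sq_eq_two_mul_dist_midpoint_sq_add_half_dist_sq x y z
  rw [midpoint_eq_smul_add] at h
  simp only [dist_eq_norm] at h
  have hw : (⅟2 : ℝ) • (y + z) = (1 / 2 : ℝ) • y + (1 - 1 / 2 : ℝ) • z := by
    rw [smul_add]; norm_num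
  rw [hw] at h
  linarith

theorem norm_sub_sq_le_of_moreauObjective_le (hf : EConvexOn f) (hε : 0 < ε) {x y z : E} {m δ : ℝ}
    (hm : ∀ w, (m : EReal) ≤ moreauObjective ε f x w)
    (hy : moreauObjective ε f x y ≤ ((m + δ : ℝ) : EReal))
    (hz : moreauObjective ε f x z ≤ ((m + δ : ℝ) : EReal)) :
    ‖y - z‖ ^ 2 ≤ 8 * ε * δ := by
  set q : E → ℝ := fun w => ‖x - w‖ ^ 2 / (2 * ε)
  have hsub : ∀ w, moreauObjective ε f x w ≤ ((m + δ : ℝ) : EReal) →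
      f w ≤ ((m + δ - q w : ℝ) : EReal) := fun w hw => by
    rw [EReal.coe_sub,
      EReal.le_sub_iff_add_le (.inl (EReal.coe_ne_bot _)) (.inl (EReal.coe_ne_top _))]
    exact hw
  set w := (1 / 2 : ℝ) • y + (1 - 1 / 2 : ℝ) • z
  have hw := hf.le_coe_of_le_coe (hsub y hy) (hsub z hz) (t := 1 / 2) (by norm_num) (by norm_num)
  have hmw : m ≤ 1 / 2 * (m + δ - q y) + (1 - 1 / 2) * (m + δ - q z) + q w := by
    rw [← EReal.coe_le_coe_iff, EReal.coe_add]
    exact (hm w).trans (add_le_add_left hw _)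
  have hqw : q w = (q y + q z) / 2 - ‖y - z‖ ^ 2 / (8 * ε) := by
    simp only [q, w, norm_sub_midpoint_sq]
    field_simp
    ring
  rw [hqw] at hmw
  have : ‖y - z‖ ^ 2 / (8 * ε) ≤ δ := by linarith
  rwa [div_le_iff₀ (by positivity), mul_comm] at this

theorem exists_isProx [CompleteSpace E] (hlsc : LowerSemicontinuous f) (hf : EConvexOn f)
    (hε : 0 < ε) {x : E} {m : ℝ} (hm : moreau ε f x = m) : ∃ p, IsProx ε f x p :=
  (moreauObjective_lowerSemicontinuous hlsc x).exists_forall_le_of_sublevel_dist_sq_le hm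
    fun _ y z hy hz => by
      rw [dist_eq_norm]
      exact norm_sub_sq_le_of_moreauObjective_le hf hε (fun w => hm ▸ iInf_le _ w) hy hz

theorem IsProx.smul_sub_mem_subdiff (hf : EConvexOn f) (hε : 0 < ε) {x p : E}
    (hp : IsProx ε f x p) (hpT : f p ≠ ⊤) : ε⁻¹ • (x - p) ∈ subdiff f p := by
  refine ⟨hpT, fun y => ?_⟩
  by_cases hpB : f p = ⊥
  · simp [hpB]
  set A := (f p).toReal
  have hA : f p = A := (EReal.coe_toReal hpT hpB).symm
  refine EReal.le_of_forall_lt_iff_le.1 fun B hB => ?_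
  rw [hA, ← EReal.coe_add, EReal.coe_le_coe_iff, real_inner_smul_left]
  -- compare `p` with the points `t • y + (1 - t) • p` of the segment and let `t → 0`
  refine le_of_forall_mem_Ioo_le_add_mul (c := ‖y - p‖ ^ 2 / (2 * ε)) fun t ⟨ht₀, ht₁⟩ => ?_
  have hw := hf.le_coe_of_le_coe hB.le hA.le ht₀ ht₁
  have hprox : A + ‖x - p‖ ^ 2 / (2 * ε)
      ≤ t * B + (1 - t) * A + ‖x - (t • y + (1 - t) • p)‖ ^ 2 / (2 * ε) := by
    rw [← EReal.coe_le_coe_iff, EReal.coe_add, EReal.coe_add, ← hA]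
    exact (hp _).trans (add_le_add_left hw _)
  have hxw : x - (t • y + (1 - t) • p) = (x - p) - t • (y - p) := by module
  rw [hxw, norm_sub_sq_real (x - p), real_inner_smul_right, norm_smul,
    Real.norm_of_nonneg ht₀.le] at hprox
  have key : t * (A + ε⁻¹ * ⟪x - p, y - p⟫_ℝ) ≤ t * (B + t * (‖y - p‖ ^ 2 / (2 * ε))) := by
    have e : (‖x - p‖ ^ 2 - 2 * (t * ⟪x - p, y - p⟫_ℝ) + (t * ‖y - p‖) ^ 2) / (2 * ε)
        = ‖x - p‖ ^ 2 / (2 * ε) - t * (ε⁻¹ * ⟪x - p, y - p⟫_ℝ)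
          + t * (t * (‖y - p‖ ^ 2 / (2 * ε))) := by
      field_simp
    rw [e] at hprox
    linarith
  exact le_of_mul_le_mul_left key ht₀

theorem IsProx.moreau_add_inner_le (hf : EConvexOn f) (hε : 0 < ε) {x p : E}
    (hp : IsProx ε f x p) (hpT : f p ≠ ⊤) (z : E) :
    moreau ε f x + ((⟪ε⁻¹ • (x - p), z - x⟫_ℝ : ℝ) : EReal) ≤ moreau ε f z := by
  rw [hp.moreau_eq]
  refine le_iInf fun y => ?_
  have hsub := (hp.smul_sub_mem_subdiff hf hε hpT).2 y
  have hreal : ‖x - p‖ ^ 2 / (2 * ε) + ⟪ε⁻¹ • (x - p), z - x⟫_ℝ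
      ≤ ⟪ε⁻¹ • (x - p), y - p⟫_ℝ + ‖z - y‖ ^ 2 / (2 * ε) := by
    have hyp : y - p = ((z - x) + (x - p)) - (z - y) := by abel
    have hsq : 0 ≤ ‖(x - p) - (z - y)‖ ^ 2 / (2 * ε) := by positivity
    rw [hyp, real_inner_smul_left, real_inner_smul_left, inner_sub_right (x - p) _ (z - y),
      inner_add_right (x - p) (z - x), real_inner_self_eq_norm_sq]
    rw [norm_sub_sq_real] at hsq
    field_simp at hsq ⊢
    linarith
  calc moreauObjective ε f x p + ((⟪ε⁻¹ • (x - p), z - x⟫_ℝ : ℝ) : EReal)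
      = f p + ((‖x - p‖ ^ 2 / (2 * ε) + ⟪ε⁻¹ • (x - p), z - x⟫_ℝ : ℝ) : EReal) := by
        rw [moreauObjective, add_assoc, EReal.coe_add]
    _ ≤ f p + ((⟪ε⁻¹ • (x - p), y - p⟫_ℝ + ‖z - y‖ ^ 2 / (2 * ε) : ℝ) : EReal) :=
        add_le_add_right (EReal.coe_le_coe_iff.2 hreal) _
    _ ≤ moreauObjective ε f z y := by
        rw [EReal.coe_add, ← add_assoc]
        exact add_le_add_left hsub _

theorem IsProx.moreau_le_add {x p : E} (hp : IsProx ε f x p) (z : E) :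
    moreau ε f z ≤ moreau ε f x
      + ((⟪ε⁻¹ • (x - p), z - x⟫_ℝ + ‖z - x‖ ^ 2 / (2 * ε) : ℝ) : EReal) := by
  have hzp : ‖z - p‖ ^ 2 / (2 * ε)
      = ‖x - p‖ ^ 2 / (2 * ε) + (⟪ε⁻¹ • (x - p), z - x⟫_ℝ + ‖z - x‖ ^ 2 / (2 * ε)) := by
    rw [show z - p = (x - p) + (z - x) by abel, norm_add_sq_real, real_inner_smul_left]
    field_simp
    ring
  calc moreau ε f z ≤ moreauObjective ε f z p := iInf_le _ p
    _ = _ := by rw [hp.moreau_eq, moreauObjective, moreauObjective, hzp, EReal.coe_add, add_assoc]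

theorem IsProx.hasFDerivAt_toReal_moreau (hf : EConvexOn f) (hε : 0 < ε) {x p : E}
    (hp : IsProx ε f x p) (hfin : ∀ z, moreau ε f z ≠ ⊤ ∧ moreau ε f z ≠ ⊥) :
    HasFDerivAt (fun z => (moreau ε f z).toReal) (innerSL ℝ (ε⁻¹ • (x - p))) x := by
  have hpT : f p ≠ ⊤ := fun h => (hfin x).1 (by rw [hp.moreau_eq, moreauObjective, h]; simp)
  have hcoe : ∀ z, moreau ε f z = ((moreau ε f z).toReal : EReal) :=
    fun z => (EReal.coe_toReal (hfin z).1 (hfin z).2).symm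
  refine hasFDerivAt_of_norm_sub_le_mul_sq (2 * ε)⁻¹ fun z => ?_
  have hlo := hp.moreau_add_inner_le hf hε hpT z
  have hup := hp.moreau_le_add z
  rw [hcoe x, hcoe z, ← EReal.coe_add, EReal.coe_le_coe_iff] at hlo hup
  have hquad : 0 ≤ (2 * ε)⁻¹ * ‖z - x‖ ^ 2 := by positivity
  rw [div_eq_inv_mul] at hup
  rw [innerSL_apply_apply, Real.norm_eq_abs, abs_le]
  constructor <;> linarith

end Moreau

theorem moreau_frechet_differentiable (f : H → EReal)
    (hf₀ : EProper f) (hf₁ : LowerSemicontinuous f) (hf₂ : EConvexOn f) (ε : ℝ) (hε : 0 < ε) :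
    (∀ x : H, moreau ε f x ≠ ⊤ ∧ moreau ε f x ≠ ⊥) ∧
    ∀ x : H, ∃ grad : H,
      HasFDerivAt (fun z : H => (moreau ε f z).toReal) (innerSL ℝ grad) x := by
  obtain ⟨hbot, x₀, hx₀⟩ := hf₀
  obtain ⟨c, β, hβ, hmin⟩ := exists_norm_minorant hf₂.convex_epigraph_s12 hf₁
    (EReal.coe_toReal hx₀ (hbot x₀)).symm
  have hfin : ∀ x, moreau ε f x ≠ ⊤ ∧ moreau ε f x ≠ ⊥ := fun x =>
    ⟨moreau_ne_top hx₀ x, ne_bot_of_le_ne_bot (EReal.coe_ne_bot _) (coe_le_moreau hβ hmin hε x)⟩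
  refine ⟨hfin, fun x => ?_⟩
  obtain ⟨p, hp⟩ := exists_isProx hf₁ hf₂ hε (EReal.coe_toReal (hfin x).1 (hfin x).2).symm
  exact ⟨_, hp.hasFDerivAt_toReal_moreau hf₂ hε hfin⟩
end
end
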